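/- (Initial study of S_t.) For every 1 ≤ t ≤ N, the partial sums of bias iterates satisfy S_t ⪯ (I − γ T̃^q) ∘ S_{t−1} + γ² M_B^q ∘ S_N + B_0 in the PSD order. -/

import Mathlib

/-!
Since `S_t = B₀ + (I − γT_B^q) ∘ S_{t−1}`, the point is to compare `I − γT_B^q` with
`I − γT̃^q`. Writing `T = γ • S`, expanding `E[(1 − T) A (1 − T)]` gives
`(I − γT_B^q) ∘ A = (I − γT̃^q) ∘ A − γ² H^q A H^q + γ² M_B^q ∘ A`.
For `A = S_{t−1}` the middle term is negative semidefinite, and `M_B^q ∘ S_{t−1} ⪯ M_B^q ∘ S_N`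
because every `B_k` is positive semidefinite (conjugation and expectation preserve the order)
and `M_B^q` is monotone.
-/

open MeasureTheory Matrix Finset

noncomputable section

/-- Entrywise expectation of a matrix-valued random variable. -/
def mex {Ω : Type*} [MeasurableSpace Ω] (μ : Measure Ω) {m n : Type*}
    (A : Ω → Matrix m n ℝ) : Matrix m n ℝ :=
  Matrix.of fun i j => ∫ ω, A ω i j ∂μ

/-- Entrywise expectation of a vector-valued random variable. -/
def vex {Ω : Type*} [MeasurableSpace Ω] (μ : Measure Ω) {n : Type*}
    (u : Ω → n → ℝ) : n → ℝ :=
  fun i => ∫ ω, u ω i ∂μ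

/-- Loewner (positive semidefinite) order on real matrices: `loew A B ↔ A ⪯ B`. -/
def loew {n : Type*} [Fintype n] (A B : Matrix n n ℝ) : Prop :=
  (B - A).PosSemidef

section Expectation

variable {Ω : Type*} [MeasurableSpace Ω] {μ : Measure Ω} {m n p : Type*}

lemma mex_apply (f : Ω → Matrix m n ℝ) (i : m) (j : n) : mex μ f i j = ∫ ω, f ω i j ∂μ :=
  rfl

lemma mex_add {f g : Ω → Matrix m n ℝ} (hf : ∀ i j, Integrable (fun ω => f ω i j) μ)
    (hg : ∀ i j, Integrable (fun ω => g ω i j) μ) :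
    mex μ (fun ω => f ω + g ω) = mex μ f + mex μ g := by
  ext i j
  exact integral_add (hf i j) (hg i j)

lemma mex_sub {f g : Ω → Matrix m n ℝ} (hf : ∀ i j, Integrable (fun ω => f ω i j) μ)
    (hg : ∀ i j, Integrable (fun ω => g ω i j) μ) :
    mex μ (fun ω => f ω - g ω) = mex μ f - mex μ g := by
  ext i j
  exact integral_sub (hf i j) (hg i j)

lemma mex_smul (c : ℝ) (f : Ω → Matrix m n ℝ) : mex μ (fun ω => c • f ω) = c • mex μ f := by
  ext i j
  exact integral_const_mul c _

lemma mex_const [IsProbabilityMeasure μ] (A : Matrix m n ℝ) : mex μ (fun _ => A) = A := by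
  ext i j
  simp [mex_apply]

lemma mex_sum {ι : Type*} (s : Finset ι) {f : ι → Ω → Matrix m n ℝ}
    (hf : ∀ k ∈ s, ∀ i j, Integrable (fun ω => f k ω i j) μ) :
    mex μ (fun ω => ∑ k ∈ s, f k ω) = ∑ k ∈ s, mex μ (f k) := by
  ext i j
  simp only [mex_apply, Matrix.sum_apply]
  exact integral_finsetSum s fun k hk => hf k hk i j

lemma isHermitian_mex {f : Ω → Matrix n n ℝ} (hf : ∀ ω, (f ω).IsHermitian) :
    (mex μ f).IsHermitian := by
  ext i j
  simp only [conjTranspose_apply, star_trivial, mex_apply]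
  exact integral_congr_ae (.of_forall fun ω => (hf ω).apply i j)

variable [Fintype n]

lemma integrable_mul_const_apply {f : Ω → Matrix m n ℝ}
    (hf : ∀ i j, Integrable (fun ω => f ω i j) μ) (A : Matrix n p ℝ) (i : m) (j : p) :
    Integrable (fun ω => (f ω * A) i j) μ := by
  simp only [mul_apply]
  exact integrable_finsetSum _ fun k _ => (hf i k).mul_const _

lemma integrable_const_mul_apply (A : Matrix m n ℝ) {f : Ω → Matrix n p ℝ}
    (hf : ∀ i j, Integrable (fun ω => f ω i j) μ) (i : m) (j : p) :
    Integrable (fun ω => (A * f ω) i j) μ := by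
  simp only [mul_apply]
  exact integrable_finsetSum _ fun k _ => (hf k j).const_mul _

lemma mex_mul_const {f : Ω → Matrix m n ℝ} (hf : ∀ i j, Integrable (fun ω => f ω i j) μ)
    (A : Matrix n p ℝ) : mex μ (fun ω => f ω * A) = mex μ f * A := by
  ext i j
  simp only [mex_apply, mul_apply]
  rw [integral_finsetSum _ fun k _ => (hf i k).mul_const _]
  simp only [integral_mul_const]

lemma mex_const_mul (A : Matrix m n ℝ) {f : Ω → Matrix n p ℝ}
    (hf : ∀ i j, Integrable (fun ω => f ω i j) μ) :
    mex μ (fun ω => A * f ω) = A * mex μ f := by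
  ext i j
  simp only [mex_apply, mul_apply]
  rw [integral_finsetSum _ fun k _ => (hf k j).const_mul _]
  simp only [integral_const_mul]

lemma integral_dotProduct_mulVec {f : Ω → Matrix m n ℝ}
    (hf : ∀ i j, Integrable (fun ω => f ω i j) μ) [Fintype m] (x : m → ℝ) (y : n → ℝ) :
    ∫ ω, x ⬝ᵥ (f ω *ᵥ y) ∂μ = x ⬝ᵥ (mex μ f *ᵥ y) := by
  have hxfy : ∀ i j, Integrable (fun ω => x i * (f ω i j * y j)) μ :=
    fun i j => ((hf i j).mul_const _).const_mul _
  simp only [dotProduct, mulVec, Finset.mul_sum]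
  rw [integral_finsetSum _ fun i _ => integrable_finsetSum _ fun j _ => hxfy i j]
  refine Finset.sum_congr rfl fun i _ => ?_
  rw [integral_finsetSum _ fun j _ => hxfy i j]
  simp only [integral_const_mul, integral_mul_const, mex_apply]

lemma posSemidef_mex {f : Ω → Matrix n n ℝ} (hf : ∀ ω, (f ω).PosSemidef)
    (hint : ∀ i j, Integrable (fun ω => f ω i j) μ) : (mex μ f).PosSemidef := by
  refine .of_dotProduct_mulVec_nonneg (isHermitian_mex fun ω => (hf ω).isHermitian) fun x => ?_
  rw [← integral_dotProduct_mulVec hint]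
  exact integral_nonneg fun ω => (hf ω).dotProduct_mulVec_nonneg x

lemma posSemidef_mex_mul_mul_self {T : Ω → Matrix n n ℝ} (hT : ∀ ω, (T ω).IsHermitian)
    {A : Matrix n n ℝ} (hA : A.PosSemidef)
    (hint : ∀ i j, Integrable (fun ω => (T ω * A * T ω) i j) μ) :
    (mex μ fun ω => T ω * A * T ω).PosSemidef :=
  posSemidef_mex (fun ω => by simpa only [(hT ω).eq] using hA.mul_mul_conjTranspose_same (T ω)) hint


variable [DecidableEq n] {T : Ω → Matrix n n ℝ} {B : ℕ → Matrix n n ℝ}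

lemma sum_range_succ_eq_add_mex
    (hint : ∀ k i j, Integrable (fun ω => ((1 - T ω) * B k * (1 - T ω)) i j) μ)
    (hB : ∀ k, B (k + 1) = mex μ fun ω => (1 - T ω) * B k * (1 - T ω)) (m : ℕ) :
    ∑ k ∈ range (m + 1), B k =
      B 0 + mex μ fun ω => (1 - T ω) * (∑ k ∈ range m, B k) * (1 - T ω) := by
  simp only [Finset.sum_range_succ', hB, Finset.mul_sum, Finset.sum_mul]
  rw [mex_sum _ fun k _ => hint k, add_comm]

lemma posSemidef_of_mex_step (hT : ∀ ω, (T ω).IsHermitian) (h₀ : (B 0).PosSemidef)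
    (hint : ∀ k i j, Integrable (fun ω => ((1 - T ω) * B k * (1 - T ω)) i j) μ)
    (hB : ∀ k, B (k + 1) = mex μ fun ω => (1 - T ω) * B k * (1 - T ω)) (k : ℕ) :
    (B k).PosSemidef := by
  induction k with
  | zero => exact h₀
  | succ k ih =>
    rw [hB k]
    exact posSemidef_mex_mul_mul_self (fun ω => isHermitian_one.sub (hT ω)) ih (hint k)

variable [IsProbabilityMeasure μ]

lemma integrable_apply_of_one_sub_mul_one_sub
    (h₁ : ∀ i j, Integrable (fun ω => ((1 - T ω) * (1 - T ω)) i j) μ)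
    (h₂ : ∀ i j, Integrable (fun ω => (T ω * T ω) i j) μ) (i j : n) :
    Integrable (fun ω => T ω i j) μ := by
  have hT : ∀ ω, T ω i j = 2⁻¹ * ((1 : Matrix n n ℝ) i j + (T ω * T ω) i j
      - ((1 - T ω) * (1 - T ω)) i j) := fun ω => by
    have : (1 - T ω) * (1 - T ω) = 1 - (T ω + T ω) + T ω * T ω := by noncomm_ring
    rw [this]
    simp only [Matrix.add_apply, Matrix.sub_apply]
    ring
  simp only [hT]
  exact (((integrable_const _).add (h₂ i j)).sub (h₁ i j)).const_mul _

lemma mex_one_sub_mul_mul_one_sub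
    (hT : ∀ i j, Integrable (fun ω => T ω i j) μ) (A : Matrix n n ℝ)
    (hTAT : ∀ i j, Integrable (fun ω => (T ω * A * T ω) i j) μ) :
    mex μ (fun ω => (1 - T ω) * A * (1 - T ω)) =
      (1 - mex μ T) * A * (1 - mex μ T) - mex μ T * A * mex μ T +
        mex μ (fun ω => T ω * A * T ω) := by
  have hTA := integrable_mul_const_apply hT A
  have hAT := integrable_const_mul_apply A hT
  have hexpand : ∀ ω, (1 - T ω) * A * (1 - T ω) =
      (A - T ω * A - A * T ω) + T ω * A * T ω := fun ω => by noncomm_ring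
  simp only [hexpand]
  rw [mex_add (f := fun ω => A - T ω * A - A * T ω)
      (fun i j => ((integrable_const (A i j)).sub (hTA i j)).sub (hAT i j)) hTAT,
    mex_sub (f := fun ω => A - T ω * A) (fun i j => (integrable_const (A i j)).sub (hTA i j)) hAT,
    mex_sub (f := fun _ => A) (fun i j => integrable_const (A i j)) hTA, mex_const, mex_mul_const hT, mex_const_mul A hT]
  noncomm_ring

end Expectation

theorem initial_study_St_general
    (d N : ℕ)
    (γ : ℝ)
    -- the randomness of one quantized batch; S = (1/B) X^{qT} X^q
    (Ωs : Type) [MeasurableSpace Ωs] (ν : Measure Ωs) [IsProbabilityMeasure ν]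
    (S : Ωs → Matrix (Fin d) (Fin d) ℝ)
    (hSpsd : ∀ ω, (S ω).PosSemidef)
    (Hq : Matrix (Fin d) (Fin d) ℝ)
    (hSmean : mex ν S = Hq)
    -- entrywise integrability of the operator integrands
    (hIntM : ∀ A : Matrix (Fin d) (Fin d) ℝ, ∀ i j : Fin d,
      Integrable (fun ω => (S ω * A * S ω) i j) ν)
    (hIntT : ∀ A : Matrix (Fin d) (Fin d) ℝ, ∀ i j : Fin d,
      Integrable (fun ω =>
        (((1 : Matrix (Fin d) (Fin d) ℝ) - γ • S ω) * A *
          ((1 : Matrix (Fin d) (Fin d) ℝ) - γ • S ω)) i j) ν)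
    -- bias iterates: B_t = (I − γT_B^q)^t ∘ B₀
    (B0 : Matrix (Fin d) (Fin d) ℝ) (hB0psd : B0.PosSemidef)
    (Bseq : ℕ → Matrix (Fin d) (Fin d) ℝ)
    (hBseq0 : Bseq 0 = B0)
    (hBseqStep : ∀ t : ℕ, Bseq (t + 1) =
      mex ν (fun ω => ((1 : Matrix (Fin d) (Fin d) ℝ) - γ • S ω) * Bseq t *
        ((1 : Matrix (Fin d) (Fin d) ℝ) - γ • S ω)))
    (t : ℕ) (ht1 : 1 ≤ t) (htN : t ≤ N) :
    loew (∑ k ∈ Finset.range t, Bseq k)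
      (((1 : Matrix (Fin d) (Fin d) ℝ) - γ • Hq) * (∑ k ∈ Finset.range (t - 1), Bseq k) *
          ((1 : Matrix (Fin d) (Fin d) ℝ) - γ • Hq) +
        γ ^ 2 • mex ν (fun ω => S ω * (∑ k ∈ Finset.range N, Bseq k) * S ω) +
        B0) := by
  set T : Ωs → Matrix (Fin d) (Fin d) ℝ := fun ω => γ • S ω
  have hTAT : ∀ A ω, T ω * A * T ω = γ ^ 2 • (S ω * A * S ω) := fun A ω => by
    simp only [T, smul_mul_assoc, mul_smul_comm, smul_smul, sq]
  have hIntTAT : ∀ A : Matrix (Fin d) (Fin d) ℝ, ∀ i j,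
      Integrable (fun ω => (T ω * A * T ω) i j) ν := fun A i j => by
    simpa only [hTAT, Matrix.smul_apply, smul_eq_mul] using (hIntM A i j).const_mul (γ ^ 2)
  have hTint := integrable_apply_of_one_sub_mul_one_sub
    (by simpa only [mul_one] using hIntT 1) (by simpa only [mul_one] using hIntTAT 1)
  have hTherm : ∀ ω, (T ω).IsHermitian := fun ω => (hSpsd ω).isHermitian.smul (.all γ)
  have hHq : Hq.IsHermitian := hSmean ▸ isHermitian_mex fun ω => (hSpsd ω).isHermitian
  have hBpsd := posSemidef_of_mex_step hTherm (hBseq0 ▸ hB0psd) (fun k => hIntT (Bseq k))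
    hBseqStep
  obtain ⟨m, rfl⟩ : ∃ m, t = m + 1 := ⟨t - 1, by omega⟩
  set X := ∑ k ∈ range m, Bseq k
  set Y := ∑ k ∈ range N, Bseq k
  have hYX : (Y - X).PosSemidef := by
    rw [show Y = X + _ from (sum_range_add_sum_Ico _ (by omega : m ≤ N)).symm,
      add_sub_cancel_left]
    exact posSemidef_sum _ fun k _ => hBpsd k
  have hmexYX : mex ν (fun ω => T ω * (Y - X) * T ω) =
      γ ^ 2 • mex ν (fun ω => S ω * Y * S ω) - mex ν (fun ω => T ω * X * T ω) := by
    simp only [mul_sub, sub_mul]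
    rw [mex_sub (hIntTAT Y) (hIntTAT X), ← mex_smul]
    simp only [hTAT]
  have hGXG : ((γ • Hq) * X * (γ • Hq)).PosSemidef := by
    simpa only [(hHq.smul (.all γ)).eq] using
      (posSemidef_sum _ fun k _ => hBpsd k).mul_mul_conjTranspose_same (γ • Hq)
  unfold loew
  rw [sum_range_succ_eq_add_mex (fun k => hIntT (Bseq k)) hBseqStep, hBseq0,
    mex_one_sub_mul_mul_one_sub hTint X (hIntTAT X), Nat.add_sub_cancel, mex_smul, hSmean]
  convert hGXG.add (posSemidef_mex_mul_mul_self hTherm hYX (hIntTAT _)) using 1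
  rw [hmexYX]
  abel

theorem initial_study_St
    (d N : ℕ) (hN : 0 < N)
    (γ : ℝ) (hγ : 0 < γ)
    -- the randomness of one quantized batch; S = (1/B) X^{qT} X^q
    (Ωs : Type) [MeasurableSpace Ωs] (ν : Measure Ωs) [IsProbabilityMeasure ν]
    (S : Ωs → Matrix (Fin d) (Fin d) ℝ)
    (hSpsd : ∀ ω, (S ω).PosSemidef)
    (Hq : Matrix (Fin d) (Fin d) ℝ) (hHqpd : Hq.PosDef)
    (hSmean : mex ν S = Hq)
    -- γ is small enough that I − γH^q ⪰ 0
    (hcontr : ((1 : Matrix (Fin d) (Fin d) ℝ) - γ • Hq).PosSemidef)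
    -- entrywise integrability of the operator integrands
    (hIntM : ∀ A : Matrix (Fin d) (Fin d) ℝ, ∀ i j : Fin d,
      Integrable (fun ω => (S ω * A * S ω) i j) ν)
    (hIntT : ∀ A : Matrix (Fin d) (Fin d) ℝ, ∀ i j : Fin d,
      Integrable (fun ω =>
        (((1 : Matrix (Fin d) (Fin d) ℝ) - γ • S ω) * A *
          ((1 : Matrix (Fin d) (Fin d) ℝ) - γ • S ω)) i j) ν)
    -- bias iterates: B_t = (I − γT_B^q)^t ∘ B₀
    (B0 : Matrix (Fin d) (Fin d) ℝ) (hB0psd : B0.PosSemidef)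
    (Bseq : ℕ → Matrix (Fin d) (Fin d) ℝ)
    (hBseq0 : Bseq 0 = B0)
    (hBseqStep : ∀ t : ℕ, Bseq (t + 1) =
      mex ν (fun ω => ((1 : Matrix (Fin d) (Fin d) ℝ) - γ • S ω) * Bseq t *
        ((1 : Matrix (Fin d) (Fin d) ℝ) - γ • S ω)))
    (t : ℕ) (ht1 : 1 ≤ t) (htN : t ≤ N) :
    loew (∑ k ∈ Finset.range t, Bseq k)
      (((1 : Matrix (Fin d) (Fin d) ℝ) - γ • Hq) * (∑ k ∈ Finset.range (t - 1), Bseq k) *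
          ((1 : Matrix (Fin d) (Fin d) ℝ) - γ • Hq) +
        γ ^ 2 • mex ν (fun ω => S ω * (∑ k ∈ Finset.range N, Bseq k) * S ω) +
        B0) :=
  initial_study_St_general d N γ Ωs ν S hSpsd Hq hSmean hIntM hIntT B0 hB0psd Bseq hBseq0 hBseqStep
    t ht1 htN

end
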